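/- arXiv:2109.14741 — 3 statements merged into one kernel-verified Lean document; each statement's English description precedes it below -/
import Mathlib

section
/- For the n-fold parallel repetition of the game in Example 6.1, the synchronous classical value equals 1 − 1/2ⁿ: the optimal synchronous deterministic strategy f : {0,1}ⁿ → {0,1}ⁿ given by f(1ⁿ) = 1ⁿ and f(x) = x̄ (bitwise complement) for x ≠ 1ⁿ achieves value 1 − 1/2ⁿ, and no synchronous strategy can exceed 1 − 1/2ⁿ. -/
/-!
On the question pair `(1ⁿ, 1ⁿ)` a synchronous strategy answers both players with the same
word `f 1ⁿ`, while any coordinate forces the first answer bit to be `0` and the second to be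
`1`; so at most `2ⁿ - 1` question pairs can be won. Answering `1ⁿ` with `1ⁿ` and every other
`x` with its complement wins all of them.
-/

open Finset

variable {ι : Type*} [Fintype ι] [DecidableEq ι]

def winningQuestions (f : (ι → Bool) → ι → Bool) : Finset (ι → Bool) :=
  univ.filter fun x => ∀ i,
    (x i = false → f x i = true ∧ f (fun _ => true) i = true) ∧
    (x i = true → f x i = false ∧ f (fun _ => true) i = true)

noncomputable def synchronousValue (f : (ι → Bool) → ι → Bool) : ℝ :=
  (winningQuestions f).card / 2 ^ Fintype.card ι

def complementStrategy (x : ι → Bool) : ι → Bool :=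
  if x = (fun _ => true) then fun _ => true else fun i => !x i

lemma top_notMem_winningQuestions [Nonempty ι] (f : (ι → Bool) → ι → Bool) :
    (fun _ => true) ∉ winningQuestions f := by
  intro h
  obtain ⟨i⟩ := ‹Nonempty ι›
  obtain ⟨hfalse, htrue⟩ := ((mem_filter.1 h).2 i).2 rfl
  simp [hfalse] at htrue

lemma winningQuestions_subset_erase_top [Nonempty ι] (f : (ι → Bool) → ι → Bool) :
    winningQuestions f ⊆ univ.erase (fun _ => true) :=
  fun x hx => mem_erase.2 ⟨fun h => top_notMem_winningQuestions f (h ▸ hx), mem_univ x⟩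

lemma winningQuestions_complementStrategy [Nonempty ι] :
    winningQuestions (complementStrategy (ι := ι)) = univ.erase (fun _ => true) := by
  refine (winningQuestions_subset_erase_top _).antisymm fun x hx => ?_
  have hx : x ≠ fun _ => true := ne_of_mem_erase hx
  simp [winningQuestions, complementStrategy, hx]

lemma card_erase_div_card_fun_bool (a : ι → Bool) :
    ((univ.erase a).card : ℝ) / 2 ^ Fintype.card ι = 1 - 1 / 2 ^ Fintype.card ι := by
  rw [card_erase_of_mem (mem_univ a), card_univ, Fintype.card_fun, Fintype.card_bool,
    Nat.cast_sub Nat.one_le_two_pow]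
  field_simp
  push_cast
  ring

lemma synchronousValue_le [Nonempty ι] (f : (ι → Bool) → ι → Bool) :
    synchronousValue f ≤ 1 - 1 / 2 ^ Fintype.card ι := by
  rw [synchronousValue, ← card_erase_div_card_fun_bool (fun _ => true)]
  gcongr
  exact winningQuestions_subset_erase_top f

lemma synchronousValue_complementStrategy [Nonempty ι] :
    synchronousValue (complementStrategy (ι := ι)) = 1 - 1 / 2 ^ Fintype.card ι := by
  rw [synchronousValue, winningQuestions_complementStrategy, card_erase_div_card_fun_bool]

/-- Synchronous classical value of the n-fold repetition equals 1 − 1/2ⁿ. -/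
theorem stmt8 (n : ℕ) (hn : 0 < n)
    (val : ((Fin n → Bool) → (Fin n → Bool)) → ℝ)
    (hval : ∀ f, val f =
      ((Finset.univ.filter (fun x : Fin n → Bool =>
          ∀ i, (x i = false → f x i = true ∧ f (fun _ => true) i = true) ∧
               (x i = true → f x i = false ∧ f (fun _ => true) i = true))).card : ℝ)
        / 2 ^ n) :
    IsGreatest {v | ∃ f, v = val f} (1 - 1 / 2 ^ n) ∧
    val (fun x => if x = (fun _ => true) then (fun _ => true) else (fun i => !x i))
      = 1 - 1 / 2 ^ n := by
  have : Nonempty (Fin n) := ⟨⟨0, hn⟩⟩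
  have hval : ∀ f, val f = synchronousValue f := fun f => by
    rw [hval, synchronousValue, Fintype.card_fin]
    congr
  have hopt : val complementStrategy = 1 - 1 / 2 ^ n := by
    rw [hval, synchronousValue_complementStrategy, Fintype.card_fin]
  refine ⟨⟨⟨_, hopt.symm⟩, ?_⟩, hopt⟩
  rintro v ⟨f, rfl⟩
  simpa only [hval, Fintype.card_fin] using synchronousValue_le f
end

section
/- If A₁ ∈ M_m(ℝ) and A₂ ∈ M_n(ℝ) are symmetric matrices and y₁ ∈ ℝ^m, y₂ ∈ ℝ^n have strictly positive entries with −Diag(y₁) ≤ A₁ ≤ Diag(y₁) and −Diag(y₂) ≤ A₂ ≤ Diag(y₂) (in the positive semidefinite order), then −Diag(y₁)⊗Diag(y₂) ≤ A₁⊗A₂ ≤ Diag(y₁)⊗Diag(y₂). -/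
/-!
Twice `D ⊗ E - A ⊗ B`, resp. `A ⊗ B + D ⊗ E`, is a sum of two Kronecker products of the positive
semidefinite matrices `D ± A` and `E ± B`, e.g.
`2 (D ⊗ E - A ⊗ B) = (D - A) ⊗ (B + E) + (A + D) ⊗ (E - B)`,
and Kronecker products of positive semidefinite matrices are positive semidefinite.
-/

open Matrix Kronecker ComplexOrder

namespace Matrix

variable {l m : Type*}

section CommRing

variable {α : Type*} [CommRing α] (A D : Matrix l l α) (B E : Matrix m m α)

theorem two_nsmul_kronecker_sub_kronecker :
    2 • (D ⊗ₖ E - A ⊗ₖ B) = (D - A) ⊗ₖ (B + E) + (A + D) ⊗ₖ (E - B) := by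
  ext ⟨i, j⟩ ⟨k, k'⟩
  simp only [smul_apply, sub_apply, add_apply, kroneckerMap_apply, nsmul_eq_mul]
  ring

theorem two_nsmul_kronecker_add_kronecker :
    2 • (A ⊗ₖ B + D ⊗ₖ E) = (D - A) ⊗ₖ (E - B) + (A + D) ⊗ₖ (B + E) := by
  ext ⟨i, j⟩ ⟨k, k'⟩
  simp only [smul_apply, sub_apply, add_apply, kroneckerMap_apply, nsmul_eq_mul]
  ring

end CommRing

variable {𝕜 : Type*} [RCLike 𝕜]

theorem PosSemidef.of_two_nsmul {M : Matrix l l 𝕜} (h : (2 • M).PosSemidef) : M.PosSemidef := by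
  have hM : M = (2⁻¹ : ℝ) • (2 • M) := by
    rw [smul_comm, two_nsmul, ← add_smul]
    norm_num
  rw [hM]
  exact h.smul (by norm_num)

variable [Finite l] [Finite m] {A D : Matrix l l 𝕜} {B E : Matrix m m 𝕜}

theorem PosSemidef.kronecker_sub_kronecker (hDA : (D - A).PosSemidef) (hAD : (A + D).PosSemidef)
    (hEB : (E - B).PosSemidef) (hBE : (B + E).PosSemidef) :
    (D ⊗ₖ E - A ⊗ₖ B).PosSemidef := by
  refine PosSemidef.of_two_nsmul ?_
  rw [two_nsmul_kronecker_sub_kronecker]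
  exact (hDA.kronecker hBE).add (hAD.kronecker hEB)

theorem PosSemidef.kronecker_add_kronecker (hDA : (D - A).PosSemidef) (hAD : (A + D).PosSemidef)
    (hEB : (E - B).PosSemidef) (hBE : (B + E).PosSemidef) :
    (A ⊗ₖ B + D ⊗ₖ E).PosSemidef := by
  refine PosSemidef.of_two_nsmul ?_
  rw [two_nsmul_kronecker_add_kronecker]
  exact (hDA.kronecker hEB).add (hAD.kronecker hBE)

end Matrix

open Kronecker in
theorem stmt10_general (m n : ℕ)
    (A₁ : Matrix (Fin m) (Fin m) ℝ) (A₂ : Matrix (Fin n) (Fin n) ℝ)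
    (y₁ : Fin m → ℝ) (y₂ : Fin n → ℝ)
    (h₁u : (Matrix.diagonal y₁ - A₁).PosSemidef)
    (h₁l : (A₁ + Matrix.diagonal y₁).PosSemidef)
    (h₂u : (Matrix.diagonal y₂ - A₂).PosSemidef)
    (h₂l : (A₂ + Matrix.diagonal y₂).PosSemidef) :
    ((Matrix.diagonal y₁ ⊗ₖ Matrix.diagonal y₂) - A₁ ⊗ₖ A₂).PosSemidef ∧
    (A₁ ⊗ₖ A₂ + Matrix.diagonal y₁ ⊗ₖ Matrix.diagonal y₂).PosSemidef :=
  ⟨h₁u.kronecker_sub_kronecker h₁l h₂u h₂l, h₁u.kronecker_add_kronecker h₁l h₂u h₂l⟩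

open Kronecker in
/-- Kronecker product preserves the sandwich −Diag(y) ≤ A ≤ Diag(y). -/
theorem stmt10 (m n : ℕ)
    (A₁ : Matrix (Fin m) (Fin m) ℝ) (A₂ : Matrix (Fin n) (Fin n) ℝ)
    (y₁ : Fin m → ℝ) (y₂ : Fin n → ℝ)
    (hA₁ : A₁.IsSymm) (hA₂ : A₂.IsSymm)
    (hy₁ : ∀ i, 0 < y₁ i) (hy₂ : ∀ i, 0 < y₂ i)
    (h₁u : (Matrix.diagonal y₁ - A₁).PosSemidef)
    (h₁l : (A₁ + Matrix.diagonal y₁).PosSemidef)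
    (h₂u : (Matrix.diagonal y₂ - A₂).PosSemidef)
    (h₂l : (A₂ + Matrix.diagonal y₂).PosSemidef) :
    ((Matrix.diagonal y₁ ⊗ₖ Matrix.diagonal y₂) - A₁ ⊗ₖ A₂).PosSemidef ∧
    (A₁ ⊗ₖ A₂ + Matrix.diagonal y₁ ⊗ₖ Matrix.diagonal y₂).PosSemidef :=
  stmt10_general m n A₁ A₂ y₁ y₂ h₁u h₁l h₂u h₂l
end

section
/- For the matrix A ∈ M₃(ℝ) with diagonal entries 1/21 and off-diagonal entries −3/21, the maximum of Tr((A⊗A)W) over 9×9 real PSD matrices W with unit diagonal equals (5/7)², which strictly exceeds (4/7)², the square of max{Tr(AP) : P ∈ E₃}. -/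
/-!
The bound is weak duality: if `c • 1 - M` is positive semidefinite, then for every positive
semidefinite `W` with unit diagonal, `tr (M W) = c · n - tr ((c • 1 - M) W) ≤ c · n`.
With `J` the all-ones matrix, `A = (4/21) • 1 - (1/7) • J` has eigenvalues `4/21` and `-5/21`, so
`c • 1 ± A` are positive semidefinite for `c = 5/21`, and
`2 (c² • 1 - A ⊗ A) = (c • 1 - A) ⊗ (c • 1 + A) + (c • 1 + A) ⊗ (c • 1 - A)` is positive
semidefinite too. This bounds the value for `A ⊗ A` by `9 (5/21)² = (5/7)²`, attained at `W = J`;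
the value for `A` is bounded by `3 · 4/21 = 4/7`, attained at `Q = (3 • 1 - J) / 2`.
-/

open Kronecker

namespace Matrix

variable {n : Type*} [Fintype n]

def allOnes (n : Type*) : Matrix n n ℝ := of fun _ _ => 1

lemma posSemidef_allOnes : (allOnes n).PosSemidef := by
  simpa [allOnes, vecMulVec] using posSemidef_vecMulVec_self_star (1 : n → ℝ)

lemma posSemidef_card_smul_one_sub_allOnes [DecidableEq n] :
    ((Fintype.card n : ℝ) • 1 - allOnes n).PosSemidef := by
  refine .of_dotProduct_mulVec_nonneg ?_ fun x => ?_
  · ext i j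
    simp [allOnes, one_apply, eq_comm]
  · have hform : star x ⬝ᵥ ((Fintype.card n : ℝ) • 1 - allOnes n) *ᵥ x
        = Fintype.card n * ∑ i, x i ^ 2 - (∑ i, x i) ^ 2 := by
      simp [dotProduct, allOnes, mulVec, sq, mul_sub, Finset.sum_sub_distrib, one_apply,
        Finset.mul_sum, mul_comm, mul_assoc]
    rw [hform, sub_nonneg]
    exact sq_sum_le_card_mul_sum_sq

lemma trace_mul_allOnes (M : Matrix n n ℝ) : (M * allOnes n).trace = ∑ i, ∑ j, M i j := by
  simp [trace, mul_apply, allOnes]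

lemma sum_kronecker_apply {m : Type*} [Fintype m] (A : Matrix n n ℝ) (B : Matrix m m ℝ) :
    ∑ p, ∑ q, (A ⊗ₖ B) p q = (∑ i, ∑ j, A i j) * ∑ i, ∑ j, B i j := by
  simp only [Fintype.sum_prod_type, kroneckerMap_apply, Finset.sum_mul_sum]

open scoped ComplexOrder in
lemma PosSemidef.trace_mul_nonneg {𝕜 : Type*} [RCLike 𝕜] {M W : Matrix n n 𝕜}
    (hM : M.PosSemidef) (hW : W.PosSemidef) : 0 ≤ (M * W).trace := by
  classical
  open scoped MatrixOrder in
  obtain ⟨B, rfl⟩ := CStarAlgebra.nonneg_iff_eq_star_mul_self.mp hW.nonneg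
  rw [← mul_assoc, trace_mul_cycle]
  exact (hM.mul_mul_conjTranspose_same B).trace_nonneg

lemma trace_mul_le_of_posSemidef_smul_one_sub [DecidableEq n] {M W : Matrix n n ℝ} {c : ℝ}
    (hM : (c • 1 - M).PosSemidef) (hW : W.PosSemidef) (hdiag : ∀ i, W i i = 1) :
    (M * W).trace ≤ c * Fintype.card n := by
  have hgap := hM.trace_mul_nonneg hW
  have htrace : W.trace = Fintype.card n := by simp [trace, hdiag]
  rw [sub_mul, trace_sub, smul_mul, one_mul, trace_smul, htrace, smul_eq_mul] at hgap
  linarith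

lemma PosSemidef.sq_smul_one_sub_kronecker_self {m : Type*} [Fintype m] [DecidableEq m]
    {A : Matrix m m ℝ} {c : ℝ} (hsub : (c • 1 - A).PosSemidef) (hadd : (c • 1 + A).PosSemidef) :
    (c ^ 2 • 1 - A ⊗ₖ A).PosSemidef := by
  have h : c ^ 2 • 1 - A ⊗ₖ A
      = (1 / 2 : ℝ) • ((c • 1 - A) ⊗ₖ (c • 1 + A) + (c • 1 + A) ⊗ₖ (c • 1 - A)) := by
    ext ⟨i, j⟩ ⟨k, l⟩
    by_cases hik : i = k <;> by_cases hjl : j = l <;> simp [hik, hjl] <;> ring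
  rw [h]
  exact ((hsub.kronecker hadd).add (hadd.kronecker hsub)).smul (by norm_num)

noncomputable def biasMatrix : Matrix (Fin 3) (Fin 3) ℝ :=
  of fun i j => if i = j then 1/21 else -3/21

lemma biasMatrix_eq : biasMatrix = (4/21 : ℝ) • 1 - (1/7 : ℝ) • allOnes (Fin 3) := by
  ext i j
  by_cases h : i = j <;> norm_num [biasMatrix, allOnes, h]

lemma posSemidef_smul_one_sub_biasMatrix {c : ℝ} (hc : 4/21 ≤ c) :
    (c • 1 - biasMatrix).PosSemidef := by
  have h : c • 1 - biasMatrix = (c - 4/21) • 1 + (1/7 : ℝ) • allOnes (Fin 3) := by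
    rw [biasMatrix_eq]; module
  rw [h]
  exact (PosSemidef.one.smul (by linarith)).add (posSemidef_allOnes.smul (by norm_num))

lemma posSemidef_smul_one_add_biasMatrix {c : ℝ} (hc : 5/21 ≤ c) :
    (c • 1 + biasMatrix).PosSemidef := by
  have h : c • 1 + biasMatrix
      = (c - 5/21) • 1 + (1/7 : ℝ) • ((Fintype.card (Fin 3) : ℝ) • 1 - allOnes (Fin 3)) := by
    rw [biasMatrix_eq, Fintype.card_fin]; module
  rw [h]
  exact (PosSemidef.one.smul (by linarith)).add
    (posSemidef_card_smul_one_sub_allOnes.smul (by norm_num))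

lemma sum_biasMatrix_apply : ∑ i, ∑ j, biasMatrix i j = -5/7 := by
  simp [biasMatrix, Fin.sum_univ_three]; norm_num

lemma trace_biasMatrix_mul_card_smul_one_sub_allOnes :
    (biasMatrix * (1/2 : ℝ) • ((Fintype.card (Fin 3) : ℝ) • 1 - allOnes (Fin 3))).trace
      = 4/7 := by
  simp [biasMatrix, allOnes, trace, mul_apply, Fin.sum_univ_three, one_apply]; norm_num

end Matrix

open Matrix

open Kronecker in
/-- The bias is not multiplicative: the SDP value for A ⊗ A is (5/7)² > (4/7)². -/
theorem stmt12 (A : Matrix (Fin 3) (Fin 3) ℝ)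
    (hA : ∀ i j, A i j = if i = j then 1/21 else -3/21) :
    IsGreatest {t | ∃ W : Matrix (Fin 3 × Fin 3) (Fin 3 × Fin 3) ℝ,
        W.PosSemidef ∧ (∀ i, W i i = 1) ∧ t = Matrix.trace ((A ⊗ₖ A) * W)}
      ((5/7 : ℝ)^2) ∧
    ((4/7 : ℝ)^2 < (5/7 : ℝ)^2) ∧
    IsGreatest {t | ∃ Q : Matrix (Fin 3) (Fin 3) ℝ,
        Q.PosSemidef ∧ (∀ i, Q i i = 1) ∧ t = Matrix.trace (A * Q)} ((4/7 : ℝ)) := by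
  obtain rfl : A = biasMatrix := ext hA
  set Q : Matrix (Fin 3) (Fin 3) ℝ :=
    (1/2 : ℝ) • ((Fintype.card (Fin 3) : ℝ) • 1 - allOnes (Fin 3)) with hQ
  have hQ_psd : Q.PosSemidef := posSemidef_card_smul_one_sub_allOnes.smul (by norm_num)
  have hQ_diag : ∀ i, Q i i = 1 := fun i => by norm_num [hQ, allOnes]
  refine ⟨⟨⟨allOnes _, posSemidef_allOnes, fun _ => rfl, ?_⟩, ?_⟩, by norm_num,
    ⟨⟨Q, hQ_psd, hQ_diag, trace_biasMatrix_mul_card_smul_one_sub_allOnes.symm⟩, ?_⟩⟩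
  · rw [trace_mul_allOnes, sum_kronecker_apply, sum_biasMatrix_apply]; norm_num
  · rintro _ ⟨W, hW, hdiag, rfl⟩
    have hdual := PosSemidef.sq_smul_one_sub_kronecker_self (c := 5/21)
      (posSemidef_smul_one_sub_biasMatrix (by norm_num))
      (posSemidef_smul_one_add_biasMatrix le_rfl)
    have := trace_mul_le_of_posSemidef_smul_one_sub hdual hW hdiag
    norm_num at this ⊢
    exact this
  · rintro _ ⟨P, hP, hdiag, rfl⟩
    have := trace_mul_le_of_posSemidef_smul_one_sub
      (posSemidef_smul_one_sub_biasMatrix le_rfl) hP hdiag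
    norm_num at this ⊢
    exact this
end
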